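/- Let E be a Bratteli diagram with vertex levels V_n and vertex labels d_v satisfying d_v ≥ Σ_{e ∈ r⁻¹(v)} d_{s(e)}. Define KE by adding, for each level n such that σ_v := d_v − Σ_{e ∈ r⁻¹(v)} d_{s(e)} > 0 for some v ∈ V_{n+1}, a new vertex w_n on level n with d_{w_n} = 1, together with σ_v edges from w_n to each v ∈ V_{n+1}. Then for every vertex v of KE, the number of finite paths in KE beginning at a vertex of S := KE⁰ \ E⁰ and ending at v equals d_v. -/

import Mathlib

/-- A directed graph: edge set `E`, vertex set `V`, with source and range maps. -/
structure DGraph (V E : Type) where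
  src : E → V
  rng : E → V

/-- `IsPathFrom G u v l` : the list of edges `l` forms a directed path from `u` to `v`. -/
def IsPathFrom {V E : Type} (G : DGraph V E) : V → V → List E → Prop
  | u, v, [] => u = v
  | u, v, e :: es => G.src e = u ∧ IsPathFrom G (G.rng e) v es

variable {V E : Type}

/-- `σ_v = d_v - Σ_{e ∈ r⁻¹(v)} d_{s(e)}`. -/
noncomputable def sigmaDef (G : DGraph V E) (d : V → ℕ)
    (hcol : ∀ v, {e | G.rng e = v}.Finite) (v : V) : ℕ :=
  d v - ∑ e ∈ (hcol v).toFinset, d (G.src e)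

/-- Vertices of `KE`: vertices of `E`, together with a new vertex `w_n` for each level `n`
such that some vertex at level `n+1` has `σ_v > 0`. -/
def KVert (G : DGraph V E) (lvl : V → ℕ) (d : V → ℕ)
    (hcol : ∀ v, {e | G.rng e = v}.Finite) : Type :=
  V ⊕ {n : ℕ // ∃ v, lvl v = n + 1 ∧ 0 < sigmaDef G d hcol v}

/-- Edges of `KE`: edges of `E`, together with `σ_v` new edges into each `v`. -/
def KEdge (G : DGraph V E) (d : V → ℕ)
    (hcol : ∀ v, {e | G.rng e = v}.Finite) : Type :=
  E ⊕ ((v : V) × Fin (sigmaDef G d hcol v))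

/-- The graph `KE`: the new edges with range `v` have source the new vertex `w_{lvl v - 1}`. -/
def KGraph (G : DGraph V E) (lvl : V → ℕ) (d : V → ℕ)
    (hcol : ∀ v, {e | G.rng e = v}.Finite) (hlvl : ∀ v, 1 ≤ lvl v) :
    DGraph (KVert G lvl d hcol) (KEdge G d hcol) where
  src := fun e => match e with
    | Sum.inl e => Sum.inl (G.src e)
    | Sum.inr ⟨v, i⟩ =>
        Sum.inr ⟨lvl v - 1, ⟨v, by have := hlvl v; omega, i.pos⟩⟩
  rng := fun e => match e with
    | Sum.inl e => Sum.inl (G.rng e)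
    | Sum.inr ⟨v, _⟩ => Sum.inl v

/-- The labels on `KE`: `d_v` on old vertices, `1` on the new vertices `w_n`. -/
def KLabel (G : DGraph V E) (lvl : V → ℕ) (d : V → ℕ)
    (hcol : ∀ v, {e | G.rng e = v}.Finite) :
    KVert G lvl d hcol → ℕ :=
  Sum.elim d (fun _ => 1)

/-!
Cut a path from `S` to an old vertex `v` at its last edge. Either that edge is an edge `e` of
`E` into `v`, and what precedes it is a path from `S` to `s(e)`; or it is one of the `σ_v` new
edges into `v`, whose source `w_n` receives no edges, so that the path is that single edge.
Hence the number of such paths is `Σ_{e ∈ r⁻¹(v)} d_{s(e)} + σ_v = d_v`, by induction on the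
level of `v`; at `w_n` itself the only path is the trivial one.
-/

namespace DGraph

variable (H : DGraph V E)

theorem isPathFrom_append_singleton {u v : V} {l : List E} {e : E} :
    IsPathFrom H u v (l ++ [e]) ↔ IsPathFrom H u (H.src e) l ∧ H.rng e = v := by
  induction l generalizing u with
  | nil => simp only [List.nil_append, IsPathFrom, eq_comm]
  | cons f fs ih => simp only [List.cons_append, IsPathFrom, ih, and_assoc]

def pathsFrom (S : Set V) (x : V) : Set (V × List E) :=
  {q | q.1 ∈ S ∧ IsPathFrom H q.1 x q.2}

variable {H} {S : Set V} {x : V}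

theorem pathsFrom_eq_singleton (hx : x ∈ S) (hin : ∀ e, H.rng e ≠ x) :
    H.pathsFrom S x = {(x, [])} := by
  ext ⟨u, l⟩
  rcases l.eq_nil_or_concat' with rfl | ⟨l, e, rfl⟩
  · simp only [pathsFrom, IsPathFrom, Set.mem_ofPred_eq, Set.mem_singleton_iff, Prod.mk.injEq,
      and_true]
    exact ⟨fun h => h.2, fun h => ⟨h ▸ hx, h⟩⟩
  · simp [pathsFrom, isPathFrom_append_singleton, hin]

variable (H S x)

def appendEdge : (Σ e : {e // H.rng e = x}, H.pathsFrom S (H.src e)) → H.pathsFrom S x :=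
  fun ⟨e, p⟩ =>
    ⟨(p.1.1, p.1.2 ++ [e.1]), p.2.1, (isPathFrom_append_singleton H).2 ⟨p.2.2, e.2⟩⟩

variable {H S x}

theorem appendEdge_bijective (hx : x ∉ S) : Function.Bijective (H.appendEdge S x) := by
  constructor
  · rintro ⟨⟨e, he⟩, ⟨⟨u, l⟩, hp⟩⟩ ⟨⟨e', he'⟩, ⟨⟨u', l'⟩, hp'⟩⟩ h
    replace h := congrArg Subtype.val h
    simp only [appendEdge, Prod.mk.injEq] at h
    obtain ⟨rfl, hl⟩ := h
    obtain ⟨rfl, rfl⟩ : l = l' ∧ e = e' := by simpa using List.append_inj' hl rfl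
    rfl
  · rintro ⟨⟨u, l⟩, hu, hp⟩
    rcases l.eq_nil_or_concat' with rfl | ⟨l, e, rfl⟩
    · exact absurd ((hp : u = x) ▸ hu) hx
    · obtain ⟨hp, he⟩ := (isPathFrom_append_singleton H).1 hp
      exact ⟨⟨⟨e, he⟩, ⟨(u, l), hu, hp⟩⟩, rfl⟩

noncomputable def pathsFromEquivSigma (hx : x ∉ S) :
    H.pathsFrom S x ≃ Σ e : {e // H.rng e = x}, H.pathsFrom S (H.src e) :=
  (Equiv.ofBijective _ (appendEdge_bijective hx)).symm

end DGraph

section KGraph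

open DGraph

variable (G : DGraph V E) (lvl d : V → ℕ) (hcol : ∀ v, {e | G.rng e = v}.Finite)
  (hlvl : ∀ v, 1 ≤ lvl v)

variable {G lvl d hcol} in
def kNewVerts : Set (KVert G lvl d hcol) := {u | ∃ n, u = Sum.inr n}

def kPaths (x : KVert G lvl d hcol) : Set (KVert G lvl d hcol × List (KEdge G d hcol)) :=
  (KGraph G lvl d hcol hlvl).pathsFrom kNewVerts x

def kInEdge (v : V) :
    {e : E // G.rng e = v} ⊕ Fin (sigmaDef G d hcol v) →
      {e : KEdge G d hcol // (KGraph G lvl d hcol hlvl).rng e = Sum.inl v}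
  | Sum.inl e => ⟨Sum.inl e.1, congrArg Sum.inl e.2⟩
  | Sum.inr i => ⟨Sum.inr ⟨v, i⟩, rfl⟩

variable {G lvl d hcol}

theorem kPaths_of_mem_kNewVerts {u : KVert G lvl d hcol} (hu : u ∈ kNewVerts) :
    kPaths G lvl d hcol hlvl u = {(u, [])} := by
  refine pathsFrom_eq_singleton hu fun e he => ?_
  obtain ⟨n, rfl⟩ := hu
  rcases e with e | ⟨w, i⟩ <;> exact Sum.inl_ne_inr he

theorem kInEdge_bijective (v : V) : Function.Bijective (kInEdge G lvl d hcol hlvl v) := by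
  constructor
  · rintro (⟨e, he⟩ | i) (⟨e', he'⟩ | i') h <;> replace h := congrArg Subtype.val h
    · obtain rfl : e = e' := Sum.inl.inj h
      rfl
    · exact absurd h Sum.inl_ne_inr
    · exact absurd h Sum.inr_ne_inl
    · simpa using Sum.inr.inj h
  · rintro ⟨e | ⟨w, i⟩, h⟩
    · exact ⟨Sum.inl ⟨e, Sum.inl.inj h⟩, rfl⟩
    · obtain rfl : w = v := Sum.inl.inj h
      exact ⟨Sum.inr i, rfl⟩

theorem kPaths_inl_of_src {v : V} (hlabel : ∑ e ∈ (hcol v).toFinset, d (G.src e) ≤ d v)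
    (hsrc : ∀ e, G.rng e = v →
      (kPaths G lvl d hcol hlvl (Sum.inl (G.src e))).encard = d (G.src e)) :
    (kPaths G lvl d hcol hlvl (Sum.inl v)).encard = d v := by
  set K := KGraph G lvl d hcol hlvl
  set ι := kInEdge G lvl d hcol hlvl v
  have : Fintype {e // G.rng e = v} := (hcol v).fintype
  have hnew (i) :
      kPaths G lvl d hcol hlvl (K.src (ι (Sum.inr i))) = {(K.src (Sum.inr ⟨v, i⟩), [])} :=
    kPaths_of_mem_kNewVerts hlvl ⟨_, rfl⟩
  have : ∀ s, Finite (kPaths G lvl d hcol hlvl (K.src (ι s))) := by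
    rintro (e | i)
    · exact (Set.finite_of_encard_eq_coe (hsrc e.1 e.2)).to_subtype
    · rw [hnew]
      infer_instance
  have eqv :
      kPaths G lvl d hcol hlvl (Sum.inl v) ≃ Σ s, kPaths G lvl d hcol hlvl (K.src (ι s)) :=
    (pathsFromEquivSigma (by rintro ⟨_, h⟩; exact Sum.inl_ne_inr h)).trans
      (Equiv.sigmaCongrLeft (Equiv.ofBijective ι (kInEdge_bijective hlvl v))).symm
  have hcard : Nat.card (Σ s, kPaths G lvl d hcol hlvl (K.src (ι s))) =
      ∑ e ∈ (hcol v).toFinset, d (G.src e) + sigmaDef G d hcol v := by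
    rw [Nat.card_sigma, Fintype.sum_sum_type,
      Finset.sum_subtype _ (fun e => (hcol v).mem_toFinset)]
    congr 1
    · refine Fintype.sum_congr _ _ fun e => ?_
      rw [Nat.card_coe_set_eq, Set.ncard_def]
      exact (congrArg ENat.toNat (hsrc e.1 e.2)).trans (ENat.toNat_natCast _)
    · simp only [Nat.card_coe_set_eq, hnew, Set.ncard_singleton, Finset.sum_const,
        Finset.card_univ, Fintype.card_fin, smul_eq_mul, mul_one]
  have hfin : (kPaths G lvl d hcol hlvl (Sum.inl v)).Finite :=
    Set.finite_coe_iff.mp (Finite.of_equiv _ eqv.symm)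
  rw [← hfin.cast_ncard_eq, ← Nat.card_coe_set_eq, Nat.card_congr eqv, hcard, sigmaDef,
    Nat.add_sub_cancel' hlabel]

theorem kPaths_inl (hedge : ∀ e, lvl (G.rng e) = lvl (G.src e) + 1)
    (hlabel : ∀ v, ∑ e ∈ (hcol v).toFinset, d (G.src e) ≤ d v) (v : V) :
    (kPaths G lvl d hcol hlvl (Sum.inl v)).encard = d v := by
  induction h : lvl v using Nat.strong_induction_on generalizing v with
  | _ k ih =>
    refine kPaths_inl_of_src hlvl (hlabel v) fun e he => ih _ ?_ _ rfl
    rw [← h, ← he, hedge]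
    omega

end KGraph

theorem stmt0_general (G : DGraph V E) (lvl : V → ℕ) (d : V → ℕ)
    (hlvl : ∀ v, 1 ≤ lvl v)
    (hedge : ∀ e, lvl (G.rng e) = lvl (G.src e) + 1)
    (hcol : ∀ v, {e | G.rng e = v}.Finite)
    (hlabel : ∀ v, ∑ e ∈ (hcol v).toFinset, d (G.src e) ≤ d v) :
    ∀ x : KVert G lvl d hcol,
      Set.ncard {q : KVert G lvl d hcol × List (KEdge G d hcol) |
          (∃ n, q.1 = Sum.inr n) ∧ IsPathFrom (KGraph G lvl d hcol hlvl) q.1 x q.2}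
        = KLabel G lvl d hcol x := by
  rintro (v | n)
  · change (kPaths G lvl d hcol hlvl (Sum.inl v)).ncard = d v
    rw [Set.ncard_def, kPaths_inl hlvl hedge hlabel v, ENat.toNat_natCast]
  · change (kPaths G lvl d hcol hlvl (Sum.inr n)).ncard = 1
    rw [kPaths_of_mem_kNewVerts hlvl ⟨n, rfl⟩, Set.ncard_singleton]

/-- For a Bratteli diagram `E` (finite levels `V_n`, `n ≥ 1`, edges from level `n` to level
`n+1`, labels `d_v ≥ Σ_{e ∈ r⁻¹(v)} d_{s(e)} > 0`), the number of finite paths in `KE`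
beginning at a vertex of `S = KE⁰ \ E⁰` and ending at `x` equals `d_x`, for every vertex `x`
of `KE`.  (A path is recorded as its starting vertex together with its list of edges.) -/
theorem stmt0 (G : DGraph V E) (lvl : V → ℕ) (d : V → ℕ)
    (hlvl : ∀ v, 1 ≤ lvl v)
    (hfinlevel : ∀ n, {v | lvl v = n}.Finite)
    (hedge : ∀ e, lvl (G.rng e) = lvl (G.src e) + 1)
    (hcol : ∀ v, {e | G.rng e = v}.Finite)
    (hdpos : ∀ v, 0 < d v)
    (hlabel : ∀ v, ∑ e ∈ (hcol v).toFinset, d (G.src e) ≤ d v) :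
    ∀ x : KVert G lvl d hcol,
      Set.ncard {q : KVert G lvl d hcol × List (KEdge G d hcol) |
          (∃ n, q.1 = Sum.inr n) ∧ IsPathFrom (KGraph G lvl d hcol hlvl) q.1 x q.2}
        = KLabel G lvl d hcol x :=
  stmt0_general G lvl d hlvl hedge hcol hlabel
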